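/- arXiv:2010.03884 — 5 statements merged into one kernel-verified Lean document; each statement's English description precedes it below -/
import Mathlib

section
/- Let u be a bidirectional infinite word over a finite alphabet A that is c-balanced (for any two factors w, v of u with |w| = |v| and any letter a, ||w|_a - |v|_a| ≤ c). Then for every letter a ∈ A the frequency ρ_a = lim_{|w|→∞, w factor of u} |w|_a/|w| exists. -/
/-!
Let `g n` count the letter `a` in the factor `u 0 ⋯ u (n - 1)`. Splitting that factor at `m`
and comparing the second piece with the prefix of the same length shows that `g` is additive
up to the balance constant `c`, so `g + c` is subadditive and Fekete's lemma gives a limit `ρ`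
of `g n / n`. Any factor of length `n` differs from that prefix by at most `c` occurrences,
so its relative count is within `c / n` of `g n / n`.
-/

open Filter Topology

/-- `w` is a factor of the bidirectional infinite word `u : ℤ → A`. -/
def IsFactor {A : Type*} (u : ℤ → A) (w : List A) : Prop :=
  ∃ i : ℤ, w = (List.range w.length).map (fun k => u (i + k))

section QuasiAdditive

variable {f : ℕ → ℝ} {c : ℝ}

theorem subadditive_add_const_of_abs_add_sub_le (h : ∀ m n, |f (m + n) - f m - f n| ≤ c) :
    Subadditive fun n => f n + c := fun m n => by
  linarith [(abs_le.1 (h m n)).2]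

theorem mul_sub_le_add_const_of_abs_add_sub_le (h : ∀ m n, |f (m + n) - f m - f n| ≤ c)
    (n : ℕ) : n * (f 1 - c) ≤ f n + c := by
  induction n with
  | zero =>
    have : |f 0| ≤ c := by simpa using h 0 0
    simp only [CharP.cast_eq_zero, zero_mul]
    linarith [neg_abs_le (f 0)]
  | succ n ih =>
    push_cast
    linarith [(abs_le.1 (h n 1)).1]

theorem bddBelow_add_const_div_of_abs_add_sub_le (h : ∀ m n, |f (m + n) - f m - f n| ≤ c) :
    BddBelow (Set.range fun n : ℕ => (f n + c) / n) := by
  refine ⟨min 0 (f 1 - c), ?_⟩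
  rintro _ ⟨n, rfl⟩
  rcases Nat.eq_zero_or_pos n with rfl | hn
  · simp
  · exact (min_le_right _ _).trans <| (le_div_iff₀ (by exact_mod_cast hn)).2 <| by
      linarith [mul_sub_le_add_const_of_abs_add_sub_le h n]

theorem exists_tendsto_div_of_abs_add_sub_le (h : ∀ m n, |f (m + n) - f m - f n| ≤ c) :
    ∃ ρ, Tendsto (fun n : ℕ => f n / n) atTop (𝓝 ρ) := by
  have hsub := subadditive_add_const_of_abs_add_sub_le h
  refine ⟨hsub.lim, ?_⟩
  have := (hsub.tendsto_lim (bddBelow_add_const_div_of_abs_add_sub_le h)).sub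
    (tendsto_const_div_atTop_nhds_zero_nat c)
  simpa only [add_div, add_sub_cancel_right, sub_zero] using this

end QuasiAdditive

section Word

variable {A : Type*} (u : ℤ → A)

def factorAt (i : ℤ) (n : ℕ) : List A :=
  (List.range n).map fun k : ℕ => u (i + k)

@[simp]
theorem length_factorAt (i : ℤ) (n : ℕ) : (factorAt u i n).length = n := by
  simp [factorAt]

/- In `IsFactor` the index list `List.range _ : List ℕ` is coerced to `List ℤ` through the list
monad, hence the `bind`/`pure` rewriting. -/
theorem isFactor_factorAt (i : ℤ) (n : ℕ) : IsFactor u (factorAt u i n) :=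
  ⟨i, by
    simp only [length_factorAt, List.pure_def, List.bind_eq_flatMap, ← List.map_eq_flatMap,
      List.map_map]
    rfl⟩

theorem factorAt_add (i : ℤ) (m n : ℕ) :
    factorAt u i (m + n) = factorAt u i m ++ factorAt u (i + m) n := by
  simp only [factorAt, List.range_add, List.map_append, List.map_map]
  congr 1
  refine List.map_congr_left fun k _ => ?_
  simp only [Function.comp_apply, Nat.cast_add, add_assoc]

variable [DecidableEq A]

def IsBalanced (c : ℝ) : Prop :=
  ∀ w v : List A, IsFactor u w → IsFactor u v → w.length = v.length →
    ∀ a : A, |(w.count a : ℝ) - (v.count a : ℝ)| ≤ c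

variable {u} {c : ℝ}

theorem IsBalanced.abs_count_factorAt_add_sub_le (hu : IsBalanced u c) (a : A) (m n : ℕ) :
    |((factorAt u 0 (m + n)).count a : ℝ) - (factorAt u 0 m).count a
      - (factorAt u 0 n).count a| ≤ c := by
  have := hu _ _ (isFactor_factorAt u m n) (isFactor_factorAt u 0 n) (by simp) a
  rw [factorAt_add, List.count_append, zero_add]
  push_cast
  rwa [add_sub_cancel_left]

theorem IsBalanced.abs_count_div_sub_le (hu : IsBalanced u c) (a : A) {w : List A}
    (hw : IsFactor u w) :
    |(w.count a : ℝ) / w.length - ((factorAt u 0 w.length).count a : ℝ) / w.length|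
      ≤ c / w.length := by
  rw [← sub_div, abs_div, Nat.abs_cast]
  exact div_le_div_of_nonneg_right
    (hu _ _ hw (isFactor_factorAt u 0 w.length) (by simp) a) (Nat.cast_nonneg _)

end Word

theorem frequency_exists_of_balanced_general {A : Type*} [DecidableEq A]
    (u : ℤ → A) (c : ℝ)
    (hbal : ∀ w v : List A, IsFactor u w → IsFactor u v → w.length = v.length →
      ∀ a : A, |(w.count a : ℝ) - (v.count a : ℝ)| ≤ c)
    (a : A) :
    ∃ ρ : ℝ, ∀ ε : ℝ, 0 < ε → ∃ N : ℕ, ∀ w : List A, IsFactor u w →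
      N ≤ w.length → |(w.count a : ℝ) / (w.length : ℝ) - ρ| < ε := by
  have hu : IsBalanced u c := hbal
  set g : ℕ → ℝ := fun n => (factorAt u 0 n).count a
  obtain ⟨ρ, hρ⟩ := exists_tendsto_div_of_abs_add_sub_le (f := g) (hu.abs_count_factorAt_add_sub_le a)
  have hlim : Tendsto (fun n : ℕ => |g n / n - ρ| + c / n) atTop (𝓝 0) := by
    simpa using ((hρ.sub_const ρ).abs).add (tendsto_const_div_atTop_nhds_zero_nat c)
  refine ⟨ρ, fun ε hε => ?_⟩
  obtain ⟨N, hN⟩ := eventually_atTop.1 (hlim.eventually (gt_mem_nhds hε))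
  refine ⟨N, fun w hw hNw => ?_⟩
  calc |(w.count a : ℝ) / w.length - ρ|
      ≤ |(w.count a : ℝ) / w.length - g w.length / w.length| + |g w.length / w.length - ρ| :=
        abs_sub_le _ _ _
    _ ≤ c / w.length + |g w.length / w.length - ρ| := by
        gcongr; exact hu.abs_count_div_sub_le a hw
    _ < ε := by linarith [hN _ hNw]

/-- in a c-balanced bidirectional infinite word, the frequency of
every letter exists (as a limit of `|w|_a / |w|` over factors `w` with `|w| → ∞`). -/
theorem frequency_exists_of_balanced {A : Type*} [Fintype A] [DecidableEq A]
    (u : ℤ → A) (c : ℝ) (hc : 0 < c)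
    (hbal : ∀ w v : List A, IsFactor u w → IsFactor u v → w.length = v.length →
      ∀ a : A, |(w.count a : ℝ) - (v.count a : ℝ)| ≤ c)
    (a : A) :
    ∃ ρ : ℝ, ∀ ε : ℝ, 0 < ε → ∃ N : ℕ, ∀ w : List A, IsFactor u w →
      N ≤ w.length → |(w.count a : ℝ) / (w.length : ℝ) - ρ| < ε :=
  frequency_exists_of_balanced_general u c hbal a
end

section
/- Let A, B be finite alphabets, u a balanced bidirectional infinite word over A, and ψ : A* → B* a non-erasing morphism. Then ψ(u) is also a balanced infinite word over B. -/
/-- `w` is a factor of the image `ψ(u)` of the bidirectional word `u` under the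
morphism `ψ : A* → B*` (given by its values on letters): `w` is an infix of the
`ψ`-image of some factor of `u`. -/
def IsImageFactor {A B : Type*} (u : ℤ → A) (ψ : A → List B) (w : List B) : Prop :=
  ∃ z : List A, IsFactor u z ∧ w <:+: z.flatMap ψ

namespace List

variable {α β : Type*} {ψ : α → List β} {M : ℕ}

theorem sum_map_eq_sum_count [Fintype α] [DecidableEq α] {R : Type*} [AddCommMonoid R]
    (l : List α) (f : α → R) : (l.map f).sum = ∑ a, l.count a • f a := by
  rw [Finset.sum_list_map_count]
  exact Finset.sum_subset (Finset.subset_univ _) fun a _ ha => by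
    rw [count_eq_zero_of_not_mem (mt mem_toFinset.2 ha), zero_smul]

theorem exists_suffix_flatMap_eq_append (hM : ∀ a, (ψ a).length ≤ M) :
    ∀ {z : List α} {s r : List β}, z.flatMap ψ = s ++ r →
      ∃ z' s', z' <:+ z ∧ z'.flatMap ψ = s' ++ r ∧ s'.length ≤ M
  | [], s, r, h => ⟨[], [], nil_suffix, by simp_all, Nat.zero_le M⟩
  | a :: z, s, r, h => by
    obtain ⟨s₁, rfl, h'⟩ | ⟨s₁, hψ, -⟩ := append_eq_append_iff.1 (flatMap_cons ▸ h)
    · obtain ⟨z', s', hz', h', hs'⟩ := exists_suffix_flatMap_eq_append hM h'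
      exact ⟨z', s', hz'.trans (suffix_cons a z), h', hs'⟩
    · refine ⟨a :: z, s, suffix_refl _, h, le_trans ?_ (hM a)⟩
      simp [hψ]

theorem exists_prefix_flatMap_eq_append (hM : ∀ a, (ψ a).length ≤ M) {z : List α}
    {l t : List β} (h : z.flatMap ψ = l ++ t) :
    ∃ z' t', z' <+: z ∧ z'.flatMap ψ = l ++ t' ∧ t'.length ≤ M := by
  have hrev : z.reverse.flatMap (reverse ∘ ψ) = t.reverse ++ l.reverse := by
    rw [← reverse_flatMap, h, reverse_append]
  obtain ⟨z', t', hz', h', ht'⟩ := exists_suffix_flatMap_eq_append (ψ := reverse ∘ ψ)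
    (fun a => length_reverse.trans_le (hM a)) hrev
  refine ⟨z'.reverse, t'.reverse, reverse_suffix.1 (by simpa using hz'), ?_, by simpa using ht'⟩
  rw [flatMap_reverse, h', reverse_append, reverse_reverse]

theorem exists_infix_flatMap_eq_append_append (hM : ∀ a, (ψ a).length ≤ M) {z : List α}
    {w : List β} (hw : w <:+: z.flatMap ψ) :
    ∃ z' s t, z' <:+: z ∧ z'.flatMap ψ = s ++ w ++ t ∧ s.length ≤ M ∧ t.length ≤ M := by
  obtain ⟨s, t, h⟩ := hw
  obtain ⟨z₁, s₁, hz₁, h₁, hs₁⟩ :=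
    exists_suffix_flatMap_eq_append hM (h.symm.trans (append_assoc _ _ _))
  obtain ⟨z₂, t₂, hz₂, h₂, ht₂⟩ :=
    exists_prefix_flatMap_eq_append hM (h₁.trans (append_assoc _ _ _).symm)
  exact ⟨z₂, s₁, t₂, hz₂.isInfix.trans hz₁.isInfix, h₂, hs₁, ht₂⟩

theorem cast_length_flatMap {z : List α} :
    ((z.flatMap ψ).length : ℝ) = (z.map fun a => ((ψ a).length : ℝ)).sum := by
  simp [length_flatMap, Nat.cast_list_sum, Function.comp_def]

theorem cast_count_flatMap [DecidableEq β] {z : List α} {b : β} :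
    ((z.flatMap ψ).count b : ℝ) = (z.map fun a => ((ψ a).count b : ℝ)).sum := by
  simp [count_flatMap, Nat.cast_list_sum, Function.comp_def]

end List

section Factor

variable {α β : Type*} {u : ℤ → α}

-- In `IsFactor`, the list `List.range w.length` is coerced to a list of integers through the
-- list monad, i.e. as a `flatMap` of singletons.
theorem isFactor_iff_getElem {w : List α} :
    IsFactor u w ↔ ∃ i : ℤ, ∀ k (hk : k < w.length), w[k] = u (i + k) := by
  refine exists_congr fun i => ?_
  change w = ((List.range w.length).flatMap fun k : ℕ => [(k : ℤ)]).map _ ↔ _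
  rw [← List.map_eq_flatMap, List.map_map]
  refine ⟨fun h k hk => ?_, fun h => List.ext_getElem (by simp) fun k hk _ => ?_⟩
  · simp [List.getElem_of_eq h hk]
  · simp [h k hk]

theorem IsFactor.of_infix {w w' : List α} (hw : IsFactor u w) (h : w' <:+: w) :
    IsFactor u w' := by
  obtain ⟨i, hi⟩ := isFactor_iff_getElem.1 hw
  obtain ⟨j, hlen, hj⟩ := List.infix_iff_getElem?.1 h
  refine isFactor_iff_getElem.2 ⟨i + j, fun k hk => ?_⟩
  have hkj : k + j < w.length := by omega
  have hk' := hj k hk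
  rw [List.getElem?_eq_getElem hkj, Option.some_inj, hi] at hk'
  rw [← hk']
  push_cast
  ring_nf

theorem IsImageFactor.exists_isFactor {ψ : α → List β} {M : ℕ} (hM : ∀ a, (ψ a).length ≤ M)
    {w : List β} (hw : IsImageFactor u ψ w) :
    ∃ z s t, IsFactor u z ∧ z.flatMap ψ = s ++ w ++ t ∧ s.length ≤ M ∧ t.length ≤ M := by
  obtain ⟨z, hz, hw⟩ := hw
  obtain ⟨z', s, t, hz', h, hs, ht⟩ := List.exists_infix_flatMap_eq_append_append hM hw
  exact ⟨z', s, t, hz.of_infix hz', h, hs, ht⟩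

end Factor

section Balanced

variable {α β : Type*} [DecidableEq α]

def IsBalancedWith (P : List α → Prop) (c : ℝ) : Prop :=
  ∀ w v : List α, P w → P v → w.length = v.length →
    ∀ a : α, |(w.count a : ℝ) - (v.count a : ℝ)| ≤ c

variable {P : List α → Prop} {c : ℝ}

theorem IsBalancedWith.mono {c' : ℝ} (h : IsBalancedWith P c) (hc : c ≤ c') :
    IsBalancedWith P c' :=
  fun w v hw hv hl a => (h w v hw hv hl a).trans hc

variable [Fintype α] {f : α → ℝ}

theorem IsBalancedWith.sum_map_sub_le (h : IsBalancedWith P c) (hf : ∀ a, 0 ≤ f a)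
    {w v : List α} (hw : P w) (hv : P v) (hl : w.length = v.length) :
    (w.map f).sum - (v.map f).sum ≤ c * ∑ a, f a := by
  simp only [List.sum_map_eq_sum_count, nsmul_eq_mul, ← Finset.sum_sub_distrib, ← sub_mul,
    Finset.mul_sum]
  exact Finset.sum_le_sum fun a _ =>
    mul_le_mul_of_nonneg_right ((le_abs_self _).trans (h w v hw hv hl a)) (hf a)

variable {u : ℤ → α} {z₁ z₂ : List α}

theorem IsBalancedWith.sum_map_sub_le_of_length_le (h : IsBalancedWith (IsFactor u) c)
    (hf : ∀ a, 0 ≤ f a) (hz₁ : IsFactor u z₁) (hz₂ : IsFactor u z₂)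
    (hl : z₁.length ≤ z₂.length) :
    (z₁.map f).sum - (z₂.map f).sum ≤ c * ∑ a, f a := by
  have hp := h.sum_map_sub_le hf hz₁ (hz₂.of_infix (List.take_prefix z₁.length z₂).isInfix)
    (by simp [hl])
  have hr : 0 ≤ ((z₂.drop z₁.length).map f).sum := List.sum_nonneg fun x hx => by
    obtain ⟨a, -, rfl⟩ := List.mem_map.1 hx
    exact hf a
  rw [← List.take_append_drop z₁.length z₂, List.map_append, List.sum_append]
  linarith

theorem IsBalancedWith.sum_map_sub_le_sum_map_sub (h : IsBalancedWith (IsFactor u) c)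
    (hc : 0 ≤ c) {g : α → ℝ} (hg : ∀ a, 0 ≤ g a) (hgf : ∀ a, g a ≤ f a)
    (hz₁ : IsFactor u z₁) (hz₂ : IsFactor u z₂) (hl : z₁.length ≤ z₂.length) :
    (z₂.map g).sum - (z₁.map g).sum ≤ (z₂.map f).sum - (z₁.map f).sum + 2 * c * ∑ a, f a := by
  set p := z₂.take z₁.length
  set r := z₂.drop z₁.length
  have hp : IsFactor u p := hz₂.of_infix (List.take_prefix _ _).isInfix
  have hpl : z₁.length = p.length := by simp [p, hl]
  have hgp := h.sum_map_sub_le hg hp hz₁ hpl.symm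
  have hfp := h.sum_map_sub_le (fun a => (hg a).trans (hgf a)) hz₁ hp hpl
  have hr : (r.map g).sum ≤ (r.map f).sum := List.sum_le_sum fun a _ => hgf a
  have hsum : c * ∑ a, g a ≤ c * ∑ a, f a :=
    mul_le_mul_of_nonneg_left (Finset.sum_le_sum fun a _ => hgf a) hc
  rw [← List.take_append_drop z₁.length z₂, List.map_append, List.map_append, List.sum_append,
    List.sum_append]
  linarith

variable [DecidableEq β] {ψ : α → List β}

theorem IsBalancedWith.count_sub_le_of_isImageFactor (h : IsBalancedWith (IsFactor u) c)
    (hc : 0 ≤ c) {w v : List β} (hw : IsImageFactor u ψ w) (hv : IsImageFactor u ψ v)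
    (hl : w.length = v.length) (b : β) :
    (v.count b : ℝ) - w.count b ≤ (2 * c + 4) * ∑ a, ((ψ a).length : ℝ) := by
  set N := ∑ a, (ψ a).length
  have hM : ∀ a, (ψ a).length ≤ N := fun a =>
    Finset.single_le_sum (f := fun a => (ψ a).length) (fun _ _ => Nat.zero_le _)
      (Finset.mem_univ a)
  obtain ⟨z₁, s₁, t₁, hz₁, h₁, hs₁, ht₁⟩ := hw.exists_isFactor hM
  obtain ⟨z₂, s₂, t₂, hz₂, h₂, hs₂, ht₂⟩ := hv.exists_isFactor hM
  have hw_len : (w.length : ℝ) ≤ (z₁.flatMap ψ).length := by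
    norm_cast; exact h₁ ▸ (List.infix_append _ _ _).length_le
  have hv_count : (v.count b : ℝ) ≤ (z₂.flatMap ψ).count b := by
    norm_cast; exact h₂ ▸ (List.infix_append _ _ _).count_le b
  have hv_len : ((z₂.flatMap ψ).length : ℝ) ≤ v.length + 2 * N := by
    norm_cast; rw [h₂]; simp only [List.length_append]; omega
  have hw_count : ((z₁.flatMap ψ).count b : ℝ) ≤ w.count b + 2 * N := by
    norm_cast; rw [h₁]; simp only [List.count_append]
    have := s₁.count_le_length (a := b); have := t₁.count_le_length (a := b)
    omega
  have hl' : (w.length : ℝ) = v.length := congrArg _ hl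
  have hcount_le : ∀ a, ((ψ a).count b : ℝ) ≤ (ψ a).length := fun a => by
    exact_mod_cast List.count_le_length
  have hN : (N : ℝ) = ∑ a, ((ψ a).length : ℝ) := by push_cast [N]; rfl
  rw [← hN]
  rcases le_total z₁.length z₂.length with hz | hz
  · have key := h.sum_map_sub_le_sum_map_sub hc (fun a => Nat.cast_nonneg _) hcount_le hz₁ hz₂ hz
    rw [← List.cast_count_flatMap, ← List.cast_count_flatMap, ← List.cast_length_flatMap,
      ← List.cast_length_flatMap, ← hN] at key
    linarith
  · have key := h.sum_map_sub_le_of_length_le (fun a => Nat.cast_nonneg ((ψ a).count b)) hz₂ hz₁ hz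
    rw [← List.cast_count_flatMap, ← List.cast_count_flatMap] at key
    have hsum : c * ∑ a, ((ψ a).count b : ℝ) ≤ c * N := by
      rw [hN]; exact mul_le_mul_of_nonneg_left (Finset.sum_le_sum fun a _ => hcount_le a) hc
    linarith [mul_nonneg hc N.cast_nonneg]

theorem IsBalancedWith.isImageFactor (h : IsBalancedWith (IsFactor u) c) (hc : 0 ≤ c)
    (ψ : α → List β) :
    IsBalancedWith (IsImageFactor u ψ) ((2 * c + 4) * ∑ a, ((ψ a).length : ℝ)) :=
  fun _ _ hw hv hl b => abs_sub_le_iff.2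
    ⟨h.count_sub_le_of_isImageFactor hc hv hw hl.symm b,
      h.count_sub_le_of_isImageFactor hc hw hv hl b⟩

end Balanced

theorem image_of_balanced_is_balanced_general {A B : Type*} [Fintype A] [DecidableEq A]
    [DecidableEq B]
    (u : ℤ → A) (ψ : A → List B)
    (hbal : ∃ c : ℝ, 0 < c ∧ ∀ w v : List A, IsFactor u w → IsFactor u v →
      w.length = v.length → ∀ a : A, |(w.count a : ℝ) - (v.count a : ℝ)| ≤ c) :
    ∃ C : ℝ, 0 < C ∧ ∀ w v : List B, IsImageFactor u ψ w → IsImageFactor u ψ v →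
      w.length = v.length → ∀ b : B, |(w.count b : ℝ) - (v.count b : ℝ)| ≤ C := by
  obtain ⟨c, hc, hbal⟩ := hbal
  have hN : 0 ≤ ∑ a, ((ψ a).length : ℝ) := Finset.sum_nonneg fun a _ => Nat.cast_nonneg _
  exact ⟨(2 * c + 4) * ∑ a, ((ψ a).length : ℝ) + 1, by positivity,
    (IsBalancedWith.isImageFactor hbal hc.le ψ).mono (le_add_of_nonneg_right zero_le_one)⟩

/-- the image of a balanced bidirectional infinite word under a
non-erasing morphism is balanced. -/
theorem image_of_balanced_is_balanced {A B : Type*} [Fintype A] [DecidableEq A]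
    [Fintype B] [DecidableEq B]
    (u : ℤ → A) (ψ : A → List B) (hψ : ∀ a : A, ψ a ≠ [])
    (hbal : ∃ c : ℝ, 0 < c ∧ ∀ w v : List A, IsFactor u w → IsFactor u v →
      w.length = v.length → ∀ a : A, |(w.count a : ℝ) - (v.count a : ℝ)| ≤ c) :
    ∃ C : ℝ, 0 < C ∧ ∀ w v : List B, IsImageFactor u ψ w → IsImageFactor u ψ v →
      w.length = v.length → ∀ b : B, |(w.count b : ℝ) - (v.count b : ℝ)| ≤ C :=
  image_of_balanced_is_balanced_general u ψ hbal
end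

section
/- A Delone set Λ ⊂ ℝ is bounded distance equivalent to the lattice ξℤ (ξ > 0) if and only if there exists K > 0 such that for every N > 0, |#(Λ ∩ [0,N)) − N/ξ| ≤ K and |#(Λ ∩ [−N,0)) − N/ξ| ≤ K. -/
/-- A Delone set in ℝ: uniformly discrete and relatively dense. -/
def Delone (Λ : Set ℝ) : Prop :=
  (∃ r > 0, ∀ x ∈ Λ, ∀ y ∈ Λ, x ≠ y → r ≤ |x - y|) ∧
  (∃ R > 0, ∀ x : ℝ, ∃ y ∈ Λ, |x - y| ≤ R)

/-- `Λ` is bounded distance equivalent to `L`: there is a bijection between them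
moving every point by less than some constant `C`. -/
def BDEquiv (Λ L : Set ℝ) : Prop :=
  ∃ C > 0, ∃ g : Λ → L, Function.Bijective g ∧ ∀ x : Λ, |(x : ℝ) - (g x : ℝ)| < C

/-- The one-dimensional lattice `ξℤ`. -/
def lat (ξ : ℝ) : Set ℝ := {x : ℝ | ∃ n : ℤ, x = ξ * n}

/-!
A bounded-distance bijection `g : Λ → ξℤ` with displacement `< C` maps `Λ ∩ [a, b)` into
`ξℤ ∩ [a - C, b + C)`, and its inverse maps `ξℤ ∩ [a + C, b - C)` into `Λ ∩ [a, b)`; since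
`ξℤ` has `(b - a) / ξ ± 1` points in `[a, b)`, the counts of `Λ` are within `2C / ξ + 1` of
`N / ξ`. Conversely, the signed counting function `#(Λ ∩ [0, x)) - #(Λ ∩ [x, 0))` stays within
`K` of `x / ξ`, is strictly increasing on `Λ` and takes every integer value there, so
multiplying it by `ξ` gives a bijection `Λ → ξℤ` of displacement at most `ξK`.
-/

open Set Function

theorem Finset.exists_mem_card_filter_lt_eq {α : Type*} [LinearOrder α] (s : Finset α) {k : ℕ}
    (hk : k < s.card) : ∃ x ∈ s, (s.filter (· < x)).card = k := by
  induction s using Finset.induction_on_max generalizing k with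
  | empty => simp at hk
  | insert m s hlt ih =>
    rw [Finset.card_insert_of_notMem fun hm => lt_irrefl m (hlt m hm)] at hk
    rcases (Nat.lt_succ_iff.1 hk).lt_or_eq with hk | rfl
    · obtain ⟨x, hx, hcard⟩ := ih hk
      refine ⟨x, Finset.mem_insert_of_mem hx, ?_⟩
      rw [Finset.filter_insert, if_neg (hlt x hx).not_gt, hcard]
    · refine ⟨m, Finset.mem_insert_self m s, ?_⟩
      rw [Finset.filter_insert, if_neg (lt_irrefl m), Finset.filter_true_of_mem hlt]

theorem Set.exists_mem_natCard_inter_Ico_eq {α : Type*} [LinearOrder α] {S : Set α} {a b : α}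
    (hfin : (S ∩ Ico a b).Finite) {k : ℕ} (hk : k < Nat.card ↥(S ∩ Ico a b)) :
    ∃ x ∈ S ∩ Ico a b, Nat.card ↥(S ∩ Ico a x) = k := by
  rw [Nat.card_coe_set_eq, ncard_eq_toFinset_card _ hfin] at hk
  obtain ⟨x, hx, hcard⟩ := hfin.toFinset.exists_mem_card_filter_lt_eq hk
  rw [Finite.mem_toFinset] at hx
  refine ⟨x, hx, ?_⟩
  have hset : S ∩ Ico a x = ↑(hfin.toFinset.filter (· < x)) := by
    ext y
    simp only [mem_inter_iff, mem_Ico, Finset.coe_filter, Finite.mem_toFinset]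
    constructor
    · rintro ⟨hy, hay, hyx⟩
      exact ⟨⟨hy, hay, hyx.trans hx.2.2⟩, hyx⟩
    · rintro ⟨⟨hy, hay, -⟩, hyx⟩
      exact ⟨hy, hay, hyx⟩
  rw [hset, Nat.card_coe_set_eq, ncard_coe_finset, hcard]

theorem Set.natCard_inter_Ico_add {α : Type*} [LinearOrder α] {S : Set α} {a b c : α}
    (hab : a ≤ b) (hbc : b ≤ c) (hfin : (S ∩ Ico a c).Finite) :
    Nat.card ↥(S ∩ Ico a b) + Nat.card ↥(S ∩ Ico b c) = Nat.card ↥(S ∩ Ico a c) := by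
  rw [← Ico_union_Ico_eq_Ico hab hbc, inter_union_distrib_left] at hfin ⊢
  simp only [Nat.card_coe_set_eq]
  exact (ncard_union_eq ((Ico_disjoint_Ico_same).mono inter_subset_right inter_subset_right)
    (hfin.subset subset_union_left) (hfin.subset subset_union_right)).symm

section Lattice

variable {ξ : ℝ}

theorem mul_intCast_mem_Ico_iff (hξ : 0 < ξ) (a b : ℝ) (n : ℤ) :
    ξ * n ∈ Ico a b ↔ n ∈ Ico ⌈a / ξ⌉ ⌈b / ξ⌉ := by
  simp only [mem_Ico, Int.ceil_le, Int.lt_ceil, div_le_iff₀ hξ, lt_div_iff₀ hξ, mul_comm ξ]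

theorem lat_inter_Ico (hξ : 0 < ξ) (a b : ℝ) :
    lat ξ ∩ Ico a b = (fun n : ℤ => ξ * n) '' Ico ⌈a / ξ⌉ ⌈b / ξ⌉ := by
  ext x
  constructor
  · rintro ⟨⟨n, rfl⟩, hx⟩
    exact ⟨n, (mul_intCast_mem_Ico_iff hξ a b n).1 hx, rfl⟩
  · rintro ⟨n, hn, rfl⟩
    exact ⟨⟨n, rfl⟩, (mul_intCast_mem_Ico_iff hξ a b n).2 hn⟩

theorem finite_lat_inter_Ico (hξ : 0 < ξ) (a b : ℝ) : (lat ξ ∩ Ico a b).Finite := by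
  rw [lat_inter_Ico hξ]
  exact (finite_Ico _ _).image _

theorem natCard_lat_inter_Ico (hξ : 0 < ξ) (a b : ℝ) :
    Nat.card ↥(lat ξ ∩ Ico a b) = (⌈b / ξ⌉ - ⌈a / ξ⌉).toNat := by
  have hinj : Injective (fun n : ℤ => ξ * n) :=
    (mul_right_injective₀ hξ.ne').comp Int.cast_injective
  rw [lat_inter_Ico hξ, Nat.card_coe_set_eq, ncard_image_of_injective _ hinj, ← Finset.coe_Ico,
    ncard_coe_finset, Int.card_Ico]

theorem sub_div_sub_one_lt_natCard_lat_inter_Ico (hξ : 0 < ξ) (a b : ℝ) :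
    (b - a) / ξ - 1 < Nat.card ↥(lat ξ ∩ Ico a b) := by
  rw [natCard_lat_inter_Ico hξ]
  have hcast : ((⌈b / ξ⌉ - ⌈a / ξ⌉ : ℤ) : ℝ) ≤ ((⌈b / ξ⌉ - ⌈a / ξ⌉).toNat : ℤ) := by
    exact_mod_cast Int.self_le_toNat _
  push_cast at hcast
  linarith [Int.le_ceil (b / ξ), Int.ceil_lt_add_one (a / ξ), sub_div b a ξ]

theorem natCard_lat_inter_Ico_lt (hξ : 0 < ξ) (a b : ℝ) (hab : a ≤ b) :
    (Nat.card ↥(lat ξ ∩ Ico a b) : ℝ) < (b - a) / ξ + 1 := by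
  have hle : ⌈a / ξ⌉ ≤ ⌈b / ξ⌉ := Int.ceil_mono (div_le_div_of_nonneg_right hab hξ.le)
  rw [natCard_lat_inter_Ico hξ, ← Int.cast_natCast, Int.toNat_of_nonneg (sub_nonneg.2 hle)]
  push_cast
  linarith [Int.ceil_lt_add_one (b / ξ), Int.le_ceil (a / ξ), sub_div b a ξ]

end Lattice

theorem nonempty_embedding_inter_Ico {Λ L : Set ℝ} {C : ℝ} (g : Λ → L) (hg : Injective g)
    (hgC : ∀ x : Λ, |(x : ℝ) - g x| < C) (a b : ℝ) :
    Nonempty (↥(Λ ∩ Ico a b) ↪ ↥(L ∩ Ico (a - C) (b + C))) := by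
  refine ⟨⟨fun x => ⟨g ⟨x, x.2.1⟩, (g _).2, ?_⟩, fun x y hxy => ?_⟩⟩
  · have hx := abs_lt.1 (hgC ⟨x, x.2.1⟩)
    exact ⟨by linarith [x.2.2.1], by linarith [x.2.2.2]⟩
  · exact Subtype.ext (Subtype.mk.inj (hg (Subtype.ext (Subtype.mk.inj hxy))))

theorem abs_natCard_inter_Ico_sub_le {Λ : Set ℝ} {ξ C : ℝ} (hξ : 0 < ξ) (hC : 0 ≤ C)
    (g : Λ ≃ lat ξ) (hgC : ∀ x : Λ, |(x : ℝ) - g x| < C) {a b : ℝ} (hab : a ≤ b) :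
    |(Nat.card ↥(Λ ∩ Ico a b) : ℝ) - (b - a) / ξ| ≤ 2 * C / ξ + 1 := by
  have hgC' : ∀ y : lat ξ, |(y : ℝ) - g.symm y| < C := fun y => by
    simpa [abs_sub_comm] using hgC (g.symm y)
  obtain ⟨toLat⟩ := nonempty_embedding_inter_Ico g g.injective hgC a b
  obtain ⟨ofLat⟩ := nonempty_embedding_inter_Ico g.symm g.symm.injective hgC' (a + C) (b - C)
  rw [add_sub_cancel_right, sub_add_cancel] at ofLat
  have := (finite_lat_inter_Ico hξ (a - C) (b + C)).to_subtype
  have := Finite.of_injective toLat toLat.injective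
  have hupper : (Nat.card ↥(Λ ∩ Ico a b) : ℝ) ≤ Nat.card ↥(lat ξ ∩ Ico (a - C) (b + C)) := by
    exact_mod_cast Nat.card_le_card_of_injective toLat toLat.injective
  have hlower : (Nat.card ↥(lat ξ ∩ Ico (a + C) (b - C)) : ℝ) ≤ Nat.card ↥(Λ ∩ Ico a b) := by
    exact_mod_cast Nat.card_le_card_of_injective ofLat ofLat.injective
  have h₁ := natCard_lat_inter_Ico_lt hξ (a - C) (b + C) (by linarith)
  have h₂ := sub_div_sub_one_lt_natCard_lat_inter_Ico hξ (a + C) (b - C)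
  have e₁ : (b + C - (a - C)) / ξ = (b - a) / ξ + 2 * C / ξ := by ring
  have e₂ : (b - C - (a + C)) / ξ = (b - a) / ξ - 2 * C / ξ := by ring
  rw [abs_le]
  constructor <;> linarith

noncomputable def signedCount (S : Set ℝ) (x : ℝ) : ℤ :=
  Nat.card ↥(S ∩ Ico 0 x) - Nat.card ↥(S ∩ Ico x 0)

def HasBoundedDiscrepancy (S : Set ℝ) (ξ K : ℝ) : Prop :=
  ∀ N : ℝ, 0 < N →
    |(Nat.card ↥(S ∩ Ico 0 N) : ℝ) - N / ξ| ≤ K ∧ |(Nat.card ↥(S ∩ Ico (-N) 0) : ℝ) - N / ξ| ≤ K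

section BoundedDiscrepancy

variable {S : Set ℝ} {ξ K : ℝ}

theorem signedCount_sub (hS : ∀ a b, (S ∩ Ico a b).Finite) {x y : ℝ} (hyx : y ≤ x) :
    signedCount S x - signedCount S y = Nat.card ↥(S ∩ Ico y x) := by
  unfold signedCount
  rcases le_or_gt 0 y with hy | hy
  · rw [Ico_eq_empty_of_le hy, Ico_eq_empty_of_le (hy.trans hyx),
      ← natCard_inter_Ico_add hy hyx (hS 0 x)]
    simp
  rcases le_or_gt 0 x with hx | hx
  · rw [Ico_eq_empty_of_le hy.le, Ico_eq_empty_of_le hx,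
      ← natCard_inter_Ico_add hy.le hx (hS y x)]
    simp only [inter_empty, Nat.card_of_isEmpty, Nat.cast_add]
    ring
  · rw [Ico_eq_empty_of_le hy.le, Ico_eq_empty_of_le hx.le,
      ← natCard_inter_Ico_add hyx hx.le (hS y 0)]
    simp

theorem signedCount_strictMonoOn (hS : ∀ a b, (S ∩ Ico a b).Finite) :
    StrictMonoOn (signedCount S) S := by
  intro y hy x _ hyx
  have hpos : 0 < Nat.card ↥(S ∩ Ico y x) := by
    have := (hS y x).to_subtype
    have : Nonempty ↥(S ∩ Ico y x) := ⟨⟨y, hy, le_rfl, hyx⟩⟩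
    exact Nat.card_pos
  have := signedCount_sub hS hyx.le
  omega

theorem HasBoundedDiscrepancy.nonneg (hcount : HasBoundedDiscrepancy S ξ K) : 0 ≤ K :=
  (abs_nonneg _).trans (hcount 1 one_pos).1

theorem HasBoundedDiscrepancy.abs_signedCount_sub_div_le (hcount : HasBoundedDiscrepancy S ξ K)
    (x : ℝ) :
    |(signedCount S x : ℝ) - x / ξ| ≤ K := by
  unfold signedCount
  rcases lt_trichotomy x 0 with hx | rfl | hx
  · have h := (hcount (-x) (neg_pos.2 hx)).2
    rw [neg_neg] at h
    rw [Ico_eq_empty_of_le hx.le, ← abs_neg]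
    convert h using 2
    simp only [inter_empty, Nat.card_of_isEmpty, CharP.cast_eq_zero, Int.cast_sub, Int.cast_natCast]
    ring
  · simpa using hcount.nonneg
  · rw [Ico_eq_empty_of_le hx.le]
    simpa using (hcount x hx).1

theorem HasBoundedDiscrepancy.finite_inter_Ico (hξ : 0 < ξ)
    (hcount : HasBoundedDiscrepancy S ξ K) (a b : ℝ) : (S ∩ Ico a b).Finite := by
  have hK := hcount.nonneg
  -- an infinite set has `Nat.card = 0`, which the bound excludes once `N / ξ > K`
  have finite_of_card_near {T : Set ℝ} {N : ℝ} (hN : K < N / ξ)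
      (hT : |(Nat.card ↥(S ∩ T) : ℝ) - N / ξ| ≤ K) : (S ∩ T).Finite := by
    apply finite_of_ncard_pos
    rw [← Nat.card_coe_set_eq]
    exact_mod_cast (show (0 : ℝ) < Nat.card ↥(S ∩ T) by linarith [neg_le_of_abs_le hT])
  have hξK : 0 < ξ * (K + 1) := mul_pos hξ (by linarith)
  set N := |a| + |b| + ξ * (K + 1) with hN
  have hNpos : 0 < N := by linarith [abs_nonneg a, abs_nonneg b]
  have hNξ : K < N / ξ := by
    rw [lt_div_iff₀ hξ]
    nlinarith [abs_nonneg a, abs_nonneg b]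
  refine ((finite_of_card_near hNξ (hcount N hNpos).2).union
    (finite_of_card_near hNξ (hcount N hNpos).1)).subset ?_
  rintro x ⟨hx, hax, hxb⟩
  rcases lt_or_ge x 0 with hx0 | hx0
  · exact Or.inl ⟨hx, by linarith [neg_abs_le a, abs_nonneg b], hx0⟩
  · exact Or.inr ⟨hx, hx0, by linarith [le_abs_self b, abs_nonneg a]⟩

theorem HasBoundedDiscrepancy.exists_signedCount_eq (hξ : 0 < ξ)
    (hcount : HasBoundedDiscrepancy S ξ K) (n : ℤ) :
    ∃ x ∈ S, signedCount S x = n := by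
  have hS := hcount.finite_inter_Ico hξ
  have hK := hcount.nonneg
  set T := ξ * (|n| + K + 1)
  have hT : T / ξ = |n| + K + 1 := mul_div_cancel_left₀ _ hξ.ne'
  have hTpos : 0 < T := mul_pos hξ (by positivity)
  have hup := abs_le.1 (hcount.abs_signedCount_sub_div_le T)
  have hlo := abs_le.1 (hcount.abs_signedCount_sub_div_le (-T))
  rw [hT] at hup
  rw [neg_div, hT] at hlo
  have hn : (n : ℝ) ≤ (|n| : ℤ) ∧ -((|n| : ℤ) : ℝ) ≤ n :=
    ⟨by exact_mod_cast le_abs_self n, by exact_mod_cast neg_abs_le n⟩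
  have hnT : n < signedCount S T := by exact_mod_cast (by linarith : (n : ℝ) < signedCount S T)
  have hnmT : signedCount S (-T) < n := by
    exact_mod_cast (by linarith : (signedCount S (-T) : ℝ) < n)
  have hwindow := signedCount_sub hS (neg_le_self hTpos.le)
  obtain ⟨x, ⟨hxS, hx⟩, hxk⟩ := exists_mem_natCard_inter_Ico_eq (hS (-T) T)
    (k := (n - signedCount S (-T)).toNat) (by omega)
  refine ⟨x, hxS, ?_⟩
  have := signedCount_sub hS hx.1
  omega

theorem HasBoundedDiscrepancy.bdEquiv_lat (hξ : 0 < ξ)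
    (hcount : HasBoundedDiscrepancy S ξ K) :
    BDEquiv S (lat ξ) := by
  have hS := hcount.finite_inter_Ico hξ
  let g : S → lat ξ := fun x => ⟨ξ * signedCount S x, signedCount S x, rfl⟩
  refine ⟨ξ * K + 1, by nlinarith [hcount.nonneg], g, ⟨fun x y hxy => ?_, ?_⟩, fun x => ?_⟩
  · have h : signedCount S x = signedCount S y := by
      exact_mod_cast mul_left_cancel₀ hξ.ne' (Subtype.mk.inj hxy)
    exact Subtype.ext ((signedCount_strictMonoOn hS).injOn x.2 y.2 h)
  · rintro ⟨_, n, rfl⟩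
    obtain ⟨x, hx, hxn⟩ := hcount.exists_signedCount_eq hξ n
    exact ⟨⟨x, hx⟩, Subtype.ext (by simp [g, hxn])⟩
  · calc |(x : ℝ) - ξ * signedCount S x| = ξ * |(signedCount S x : ℝ) - x / ξ| := by
          rw [← abs_of_pos hξ, ← abs_mul, abs_of_pos hξ, ← abs_neg]
          congr 1
          field_simp
          ring
      _ ≤ ξ * K := mul_le_mul_of_nonneg_left (hcount.abs_signedCount_sub_div_le x) hξ.le
      _ < ξ * K + 1 := lt_add_one _

end BoundedDiscrepancy

theorem bdl_iff_bounded_discrepancy_general (Λ : Set ℝ) (ξ : ℝ) (hξ : 0 < ξ) :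
    BDEquiv Λ (lat ξ) ↔
      ∃ K > 0, ∀ N : ℝ, 0 < N →
        |(Nat.card ↥(Λ ∩ Set.Ico 0 N) : ℝ) - N / ξ| ≤ K ∧
        |(Nat.card ↥(Λ ∩ Set.Ico (-N) 0) : ℝ) - N / ξ| ≤ K := by
  constructor
  · rintro ⟨C, hC, g, hg, hgC⟩
    have hcount {a b : ℝ} (hab : a ≤ b) :=
      abs_natCard_inter_Ico_sub_le hξ hC.le (Equiv.ofBijective g hg) hgC hab
    refine ⟨2 * C / ξ + 1, by positivity, fun N hN => ⟨?_, ?_⟩⟩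
    · simpa using hcount hN.le
    · simpa using hcount (neg_nonpos.2 hN.le)
  · rintro ⟨K, -, hcount⟩
    exact HasBoundedDiscrepancy.bdEquiv_lat hξ hcount

/-- a Delone set `Λ ⊂ ℝ` is bounded distance equivalent to `ξℤ`
(`ξ > 0`) iff the counts of `Λ` in `[0,N)` and `[-N,0)` differ from `N/ξ` by a
uniformly bounded amount. -/
theorem bdl_iff_bounded_discrepancy (Λ : Set ℝ) (hΛ : Delone Λ) (ξ : ℝ) (hξ : 0 < ξ) :
    BDEquiv Λ (lat ξ) ↔
      ∃ K > 0, ∀ N : ℝ, 0 < N →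
        |(Nat.card ↥(Λ ∩ Set.Ico 0 N) : ℝ) - N / ξ| ≤ K ∧
        |(Nat.card ↥(Λ ∩ Set.Ico (-N) 0) : ℝ) - N / ξ| ≤ K :=
  bdl_iff_bounded_discrepancy_general Λ ξ hξ
end

section
/- Let φ be a substitution over a d-letter alphabet A whose incidence matrix M has at least one eigenvalue of modulus less than 1, and let u be a bidirectional fixed point of φ. Then there exist a vector f ∈ ℝ^d linearly independent of (1,…,1)^T and a constant K > 0 such that |f^T P[n]| ≤ K for every n ∈ ℤ, where P[n] is the signed Parikh vector of u. -/
/-- `φ` is a substitution: a non-erasing morphism (given by its values on letters)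
with letters `a`, `b` such that `φ(a) = a·w` and `φ(b) = v·b` for nonempty `w`, `v`. -/
def IsSubstitution {A : Type*} (φ : A → List A) : Prop :=
  (∀ a : A, φ a ≠ []) ∧
  (∃ a : A, ∃ w : List A, w ≠ [] ∧ φ a = a :: w) ∧
  (∃ b : A, ∃ v : List A, v ≠ [] ∧ φ b = v ++ [b])

/-- `u : ℤ → A` is a bidirectional fixed point of `φ`: there is a tiling of `ℤ`
by consecutive blocks (with block boundaries `k n`, `k 0 = 0`) such that the `n`-th
block of `u` equals `φ(u_n)`; i.e. `φ(u) = u` with the delimiter at position 0. -/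
def IsBidirFixedPoint {A : Type*} (φ : A → List A) (u : ℤ → A) : Prop :=
  ∃ k : ℤ → ℤ, k 0 = 0 ∧
    (∀ n : ℤ, k (n + 1) = k n + (φ (u n)).length) ∧
    (∀ n : ℤ, (List.range (φ (u n)).length).map (fun j => u (k n + j)) = φ (u n))

/-- Signed Parikh count (the `a`-entry of the signed Parikh vector `P[n]`). -/
def sCount {A : Type*} [DecidableEq A] (u : ℤ → A) (a : A) (n : ℤ) : ℤ :=
  if 0 ≤ n then (((List.range n.toNat).map (fun k => u k)).count a : ℤ)
  else -((((List.range (-n).toNat).map (fun k => u (n + k))).count a : ℤ))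

/-!
Take a left eigenvector `g` of `M` for the eigenvalue `μ`, `|μ| < 1`; it is not constant, since
`(1,…,1) M = (|φ(a)|)_a` and `|φ(a)| ≥ 1`. Put `G(n) = g · P[n]`. If `k m` is the start of the
`m`-th block of the fixed point, then `P[k m] = M P[m]`, so `G(k m) = μ G(m)`, and inside a block
`G` moves by at most `C = (∑ |g a|) · max |φ(a)|`. The block containing `n` has index `m` with
`m = n` or `|m| < |n|`, so induction on `|n|` gives `|G(n)| ≤ C / (1 - |μ|)`. The real or the
imaginary part of `g` is then a non-constant real form with the same bound.
-/

open Matrix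

section

variable {A : Type*}

def window (u : ℤ → A) (m : ℤ) (L : ℕ) : List A :=
  (List.range L).map fun j : ℕ => u (m + j)

lemma window_succ (u : ℤ → A) (m : ℤ) (L : ℕ) :
    window u m (L + 1) = window u m L ++ [u (m + L)] := by
  simp [window, List.range_succ]

lemma window_succ' (u : ℤ → A) (m : ℤ) (L : ℕ) :
    window u m (L + 1) = u m :: window u (m + 1) L := by
  simp only [window, List.range_succ_eq_map, List.map_cons, List.map_map]
  congr 1
  · simp
  · refine List.map_congr_left fun j _ => ?_
    simp only [Function.comp_apply]; push_cast; ring_nf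

lemma window_length (u : ℤ → A) (m : ℤ) (L : ℕ) : (window u m L).length = L := by
  simp [window]

-- `IsBidirFixedPoint` maps over `List.range` lifted to `List ℤ`; `window` keeps the indices in `ℕ`.
lemma IsBidirFixedPoint.exists_window {φ : A → List A} {u : ℤ → A}
    (hu : IsBidirFixedPoint φ u) : ∃ k : ℤ → ℤ, k 0 = 0 ∧
      (∀ n, k (n + 1) = k n + (φ (u n)).length) ∧
      ∀ n, window u (k n) (φ (u n)).length = φ (u n) := by
  obtain ⟨k, hk0, hk, hblock⟩ := hu
  refine ⟨k, hk0, hk, fun n => ?_⟩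
  rw [← hblock n]
  simp [window, ← List.map_eq_flatMap, Function.comp_def]

lemma strictMono_of_add_length {φ : A → List A} {u : ℤ → A} {k : ℤ → ℤ} (hφ : ∀ a, φ a ≠ [])
    (hk : ∀ n, k (n + 1) = k n + (φ (u n)).length) : StrictMono k :=
  strictMono_int_of_lt_succ fun n => by
    have := List.length_pos_iff.2 (hφ (u n))
    rw [hk n]
    omega

lemma StrictMono.exists_le_lt_succ {k : ℤ → ℤ} (hk : StrictMono k) (hk0 : k 0 = 0) (n : ℤ) :
    ∃ m, k m ≤ n ∧ n < k (m + 1) ∧ (m = n ∨ m.natAbs < n.natAbs) := by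
  have hmono : Monotone fun m => k m - m :=
    monotone_int_of_le_succ fun m => by have := hk (lt_add_one m); omega
  have hle : ∀ m, m ≤ 0 → k m ≤ m := fun m hm => by have := hmono hm; simp_all
  have hge : ∀ m, 0 ≤ m → m ≤ k m := fun m hm => by have := hmono hm; simp_all
  obtain ⟨m, hm, hmax⟩ := Int.exists_greatest_of_bdd (P := fun m => k m ≤ n)
    ⟨max n 0, fun z hz => by have := hge z; omega⟩ ⟨min n 0, by have := hle (min n 0); omega⟩
  have hlt : n < k (m + 1) := lt_of_not_ge fun h => by have := hmax _ h; omega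
  refine ⟨m, hm, hlt, ?_⟩
  rcases le_or_gt 0 m with h | h
  · have := hge m h; omega
  · have := hle (m + 1) (by omega); omega

lemma le_div_one_sub_of_le_mul_add {F : ℤ → ℝ} {r C : ℝ} (hr0 : 0 ≤ r) (hr1 : r < 1)
    (h : ∀ n, ∃ m, (m = n ∨ m.natAbs < n.natAbs) ∧ F n ≤ r * F m + C) (n : ℤ) :
    F n ≤ C / (1 - r) := by
  have hr : 0 < 1 - r := sub_pos.2 hr1
  induction hN : n.natAbs using Nat.strong_induction_on generalizing n with
  | _ N ih =>
    obtain ⟨m, rfl | hlt, hm⟩ := h n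
    · rw [le_div_iff₀ hr]
      linarith
    · calc F n ≤ r * F m + C := hm
        _ ≤ r * (C / (1 - r)) + C := by gcongr; exact ih _ (hN ▸ hlt) m rfl
        _ = C / (1 - r) := by field_simp [hr.ne']; ring

lemma norm_dotProduct_natCast_le [Fintype A] {R : Type*} [NormedRing R] (g : A → R) (c : A → ℕ)
    {B : ℕ} (hc : ∀ a, c a ≤ B) : ‖g ⬝ᵥ fun a => (c a : R)‖ ≤ (∑ a, ‖g a‖) * B := by
  calc ‖∑ a, g a * (c a : R)‖ ≤ ∑ a, ‖g a * (c a : R)‖ := norm_sum_le _ _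
    _ ≤ ∑ a, ‖g a‖ * B := Finset.sum_le_sum fun a _ => by
        rw [← nsmul_eq_mul', mul_comm]
        exact norm_nsmul_le.trans (by gcongr; exact_mod_cast hc a)
    _ = (∑ a, ‖g a‖) * B := (Finset.sum_mul _ _ _).symm

lemma Matrix.exists_vecMul_eq_smul_of_mulVec_eq_smul {n K : Type*} [Fintype n] [DecidableEq n]
    [CommRing K] [IsDomain K] {M : Matrix n n K} {μ : K} {v : n → K} (hv : v ≠ 0)
    (h : M *ᵥ v = μ • v) : ∃ w ≠ 0, w ᵥ* M = μ • w := by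
  have hdet : (M - μ • 1).det = 0 := exists_mulVec_eq_zero_iff.1
    ⟨v, hv, by rw [sub_mulVec, h, smul_mulVec, one_mulVec, sub_self]⟩
  obtain ⟨w, hw, hwM⟩ := exists_vecMul_eq_zero_iff.2 hdet
  exact ⟨w, hw, by rwa [vecMul_sub, vecMul_smul, vecMul_one, sub_eq_zero] at hwM⟩

lemma exists_re_or_im_not_const [Fintype A] {g : A → ℂ} (hg : ¬ ∃ t, ∀ a, g a = t) :
    ∃ f : A → ℝ, (¬ ∃ t : ℝ, ∀ a, f a = t) ∧
      ∀ x : A → ℤ, |∑ a, f a * (x a : ℝ)| ≤ ‖∑ a, g a * (x a : ℂ)‖ := by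
  by_cases hre : ∃ t : ℝ, ∀ a, (g a).re = t
  · refine ⟨fun a => (g a).im, ?_, fun x => ?_⟩
    · rintro ⟨s, hs⟩
      obtain ⟨t, ht⟩ := hre
      exact hg ⟨⟨t, s⟩, fun a => Complex.ext (ht a) (hs a)⟩
    · simpa [Complex.im_sum] using Complex.abs_im_le_norm (∑ a, g a * (x a : ℂ))
  · refine ⟨fun a => (g a).re, hre, fun x => ?_⟩
    simpa [Complex.re_sum] using Complex.abs_re_le_norm (∑ a, g a * (x a : ℂ))

section Parikh

variable [DecidableEq A]

lemma List.sum_count_eq_length [Fintype A] (l : List A) : ∑ a, l.count a = l.length := by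
  rw [← List.sum_toFinset_count_eq_length]
  exact (Finset.sum_subset (Finset.subset_univ _) fun a _ ha =>
    List.count_eq_zero.2 (by simpa using ha)).symm

lemma sCount_natCast (u : ℤ → A) (a : A) (L : ℕ) : sCount u a L = (window u 0 L).count a := by
  simp [sCount, window, ← List.map_eq_flatMap, Function.comp_def]

lemma sCount_neg_natCast (u : ℤ → A) (a : A) (L : ℕ) :
    sCount u a (-L) = -(window u (-L) L).count a := by
  rcases L with _ | L
  · simp [sCount, window]
  · rw [sCount, if_neg (by omega)]
    simp [window, ← List.map_eq_flatMap, Function.comp_def]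

lemma sCount_succ (u : ℤ → A) (a : A) (n : ℤ) :
    sCount u a (n + 1) = sCount u a n + if u n = a then 1 else 0 := by
  obtain ⟨L, rfl | rfl⟩ := Int.eq_nat_or_neg n
  · rw [← Nat.cast_succ, sCount_natCast, sCount_natCast, window_succ, List.count_append,
      List.count_singleton]
    simp [beq_iff_eq]
  · rcases L with _ | L
    · simp [sCount, List.count_singleton, beq_iff_eq]
    · have h : -((L + 1 : ℕ) : ℤ) + 1 = -L := by push_cast; ring
      rw [h, sCount_neg_natCast, sCount_neg_natCast, window_succ', h, List.count_cons]
      simp [beq_iff_eq]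

lemma sCount_add_window (u : ℤ → A) (a : A) (m : ℤ) (L : ℕ) :
    sCount u a (m + L) = sCount u a m + (window u m L).count a := by
  induction L with
  | zero => simp [window]
  | succ L ih =>
    rw [Nat.cast_succ, ← add_assoc, sCount_succ, ih, window_succ, List.count_append,
      List.count_singleton]
    simp only [beq_iff_eq]
    split_ifs <;> simp [add_assoc]

def parikhVec (R : Type*) [IntCast R] (u : ℤ → A) (n : ℤ) : A → R :=
  fun a => (sCount u a n : R)

def incidenceMatrix (R : Type*) [NatCast R] (φ : A → List A) : Matrix A A R :=
  Matrix.of fun b a => ((φ a).count b : R)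

section Ring

variable {R : Type*} [Ring R]

lemma parikhVec_succ (u : ℤ → A) (n : ℤ) :
    parikhVec R u (n + 1) = parikhVec R u n + Pi.single (u n) 1 := by
  ext a
  simp only [parikhVec, sCount_succ, Pi.add_apply, Pi.single_apply, eq_comm (a := a)]
  split_ifs <;> simp

lemma parikhVec_add_window (u : ℤ → A) (m : ℤ) (L : ℕ) :
    parikhVec R u (m + L) = parikhVec R u m + fun a => ((window u m L).count a : R) := by
  ext a
  simp [parikhVec, sCount_add_window]

variable {φ : A → List A} {u : ℤ → A} {k : ℤ → ℤ}

lemma parikhVec_blockStart_succ (hk : ∀ n, k (n + 1) = k n + (φ (u n)).length)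
    (hblock : ∀ n, window u (k n) (φ (u n)).length = φ (u n)) (m : ℤ) :
    parikhVec R u (k (m + 1)) = parikhVec R u (k m) + (incidenceMatrix R φ).col (u m) := by
  rw [hk, parikhVec_add_window, hblock]
  rfl

lemma parikhVec_blockStart [Fintype A] (hk0 : k 0 = 0)
    (hk : ∀ n, k (n + 1) = k n + (φ (u n)).length)
    (hblock : ∀ n, window u (k n) (φ (u n)).length = φ (u n)) (m : ℤ) :
    parikhVec R u (k m) = incidenceMatrix R φ *ᵥ parikhVec R u m := by
  set D : ℤ → A → R := fun m => parikhVec R u (k m) - incidenceMatrix R φ *ᵥ parikhVec R u m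
  have hD : Function.Periodic D 1 := fun m => by
    simp only [D, parikhVec_blockStart_succ hk hblock, parikhVec_succ, mulVec_add,
      mulVec_single_one]
    abel
  have hD0 : D 0 = 0 := by
    ext a
    simp [D, hk0, parikhVec, sCount, mulVec, dotProduct]
  have := hD.int_mul m 0
  simp only [mul_one, zero_add, hD0] at this
  exact sub_eq_zero.mp this

lemma dotProduct_parikhVec_blockStart [Fintype A] (hk0 : k 0 = 0)
    (hk : ∀ n, k (n + 1) = k n + (φ (u n)).length)
    (hblock : ∀ n, window u (k n) (φ (u n)).length = φ (u n)) {g : A → R} {μ : R}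
    (hg : g ᵥ* incidenceMatrix R φ = μ • g) (m : ℤ) :
    g ⬝ᵥ parikhVec R u (k m) = μ * (g ⬝ᵥ parikhVec R u m) := by
  rw [parikhVec_blockStart hk0 hk hblock, dotProduct_mulVec, hg, smul_dotProduct, smul_eq_mul]

end Ring

variable [Fintype A] {φ : A → List A}

lemma norm_dotProduct_parikhVec_sub_blockStart_le {R : Type*} [NormedRing R] {u : ℤ → A}
    {k : ℤ → ℤ} (hk : ∀ n, k (n + 1) = k n + (φ (u n)).length) (g : A → R) {m n : ℤ}
    (hmn : k m ≤ n) (hnm : n < k (m + 1)) :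
    ‖g ⬝ᵥ parikhVec R u n - g ⬝ᵥ parikhVec R u (k m)‖ ≤ (∑ a, ‖g a‖) * (φ (u m)).length := by
  obtain ⟨j, rfl⟩ : ∃ j : ℕ, n = k m + j := ⟨(n - k m).toNat, by omega⟩
  rw [parikhVec_add_window, dotProduct_add, add_sub_cancel_left]
  refine norm_dotProduct_natCast_le g _ fun a => ?_
  calc (window u (k m) j).count a ≤ (window u (k m) j).length := List.count_le_length
    _ = j := window_length u (k m) j
    _ ≤ (φ (u m)).length := by have := hk m; omega

theorem exists_norm_dotProduct_parikhVec_le {R : Type*} [NormedRing R] (hφ : ∀ a, φ a ≠ [])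
    {u : ℤ → A} (hu : IsBidirFixedPoint φ u) {g : A → R} {μ : R}
    (hg : g ᵥ* incidenceMatrix R φ = μ • g) (hμ : ‖μ‖ < 1) :
    ∃ K, ∀ n, ‖g ⬝ᵥ parikhVec R u n‖ ≤ K := by
  obtain ⟨k, hk0, hk, hblock⟩ := hu.exists_window
  set L := Finset.univ.sup fun a => (φ a).length
  refine ⟨(∑ a, ‖g a‖) * L / (1 - ‖μ‖),
    le_div_one_sub_of_le_mul_add (norm_nonneg μ) hμ fun n => ?_⟩
  obtain ⟨m, hmn, hnm, hdesc⟩ := (strictMono_of_add_length hφ hk).exists_le_lt_succ hk0 n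
  refine ⟨m, hdesc, ?_⟩
  calc ‖g ⬝ᵥ parikhVec R u n‖
      ≤ ‖g ⬝ᵥ parikhVec R u (k m)‖ + ‖g ⬝ᵥ parikhVec R u n - g ⬝ᵥ parikhVec R u (k m)‖ :=
        norm_le_norm_add_norm_sub' _ _
    _ ≤ ‖μ‖ * ‖g ⬝ᵥ parikhVec R u m‖ + (∑ a, ‖g a‖) * L := by
        gcongr
        · rw [dotProduct_parikhVec_blockStart hk0 hk hblock hg]
          exact norm_mul_le _ _
        · refine (norm_dotProduct_parikhVec_sub_blockStart_le hk g hmn hnm).trans ?_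
          gcongr
          exact_mod_cast Finset.le_sup (f := fun a => (φ a).length) (Finset.mem_univ (u m))

lemma not_exists_const_of_vecMul_incidenceMatrix {𝕜 : Type*} [RCLike 𝕜] (hφ : ∀ a, φ a ≠ [])
    {g : A → 𝕜} (hg0 : g ≠ 0) {μ : 𝕜} (hg : g ᵥ* incidenceMatrix 𝕜 φ = μ • g) (hμ : ‖μ‖ < 1) :
    ¬ ∃ t, ∀ a, g a = t := by
  rintro ⟨t, ht⟩
  obtain ⟨b, hb⟩ := Function.ne_iff.1 hg0
  have hcol := congrFun hg b
  simp only [vecMul, dotProduct, incidenceMatrix, of_apply, ht, Pi.smul_apply, smul_eq_mul,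
    ← Finset.mul_sum] at hcol
  have hμb : μ = (φ b).length := by
    rw [← List.sum_count_eq_length, Nat.cast_sum]
    exact mul_left_cancel₀ (ht b ▸ hb) (hcol.trans (mul_comm μ t)).symm
  have : 1 ≤ (φ b).length := List.length_pos_iff.2 (hφ b)
  rw [hμb, RCLike.norm_natCast] at hμ
  exact absurd hμ (not_lt.2 (by exact_mod_cast this))

end Parikh

end

/-- if the incidence matrix `M_{ba} = |φ(a)|_b` of a substitution `φ`
has an eigenvalue of modulus `< 1`, and `u` is a bidirectional fixed point of `φ`,
then there are a vector `f` linearly independent of `(1,…,1)` (i.e. non-constant)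
and `K > 0` with `|fᵀ P[n]| ≤ K` for all `n ∈ ℤ`. -/
theorem bounded_form_of_small_eigenvalue {A : Type*} [Fintype A] [DecidableEq A]
    (φ : A → List A) (hφ : IsSubstitution φ)
    (heig : ∃ μ : ℂ, ‖μ‖ < 1 ∧ ∃ v : A → ℂ, v ≠ 0 ∧
      (Matrix.of fun b a : A => ((φ a).count b : ℂ)).mulVec v = μ • v)
    (u : ℤ → A) (hu : IsBidirFixedPoint φ u) :
    ∃ f : A → ℝ, (¬ ∃ t : ℝ, ∀ a : A, f a = t) ∧
      ∃ K > 0, ∀ n : ℤ, |∑ a : A, f a * (sCount u a n : ℝ)| ≤ K := by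
  obtain ⟨μ, hμ, v, hv0, hv⟩ := heig
  obtain ⟨g, hg0, hg⟩ := exists_vecMul_eq_smul_of_mulVec_eq_smul hv0 hv
  obtain ⟨f, hf, hfg⟩ := exists_re_or_im_not_const
    (not_exists_const_of_vecMul_incidenceMatrix hφ.1 hg0 hg hμ)
  obtain ⟨K, hK⟩ := exists_norm_dotProduct_parikhVec_le hφ.1 hu hg hμ
  exact ⟨f, hf, max K 1, by positivity, fun n => (hfg _).trans ((hK n).trans (le_max_left _ _))⟩
end

section
/- Let A, B, C, D be integers with AD − BC = ±1 (unimodular), and ε, η irrational with ε ≠ η, A + Cε ≠ 0, A + Cη ≠ 0, Ω a bounded interval. Then Σ_{ε,η}(Ω) = (A + Cη) · Σ_{ε̃, η̃}((1/(A+Cε))·Ω), where ε̃ = (B + Dε)/(A + Cε) and η̃ = (B + Dη)/(A + Cη). -/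
/-!
The integer substitution `a' = A a + B b`, `b' = C a + D b` satisfies
`a' + b' t = (A + C t) (a + b t̃)` with `t̃ = (B + D t)/(A + C t)`, both for `t = η` (the point)
and for `t = ε` (its star image, which must lie in the window). Since the matrix is unimodular,
`(a, b) ↦ (a', b')` is a bijection of `ℤ²`, so both sides range over the same lattice points.
-/

open Pointwise

/-- The cut-and-project set `Σ_{ε,η}(Ω) = {a + bη : a, b ∈ ℤ, a + bε ∈ Ω}`. -/
def cutProject (ε η : ℝ) (Ω : Set ℝ) : Set ℝ :=
  {x : ℝ | ∃ a b : ℤ, x = (a : ℝ) + (b : ℝ) * η ∧ (a : ℝ) + (b : ℝ) * ε ∈ Ω}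

lemma mul_add_mul_div_eq (A B C D a b t : ℝ) (h : A + C * t ≠ 0) :
    (A + C * t) * (a + b * ((B + D * t) / (A + C * t))) =
      (A * a + B * b) + (C * a + D * b) * t := by
  field_simp
  ring

lemma exists_mul_add_mul_eq_of_isUnit_det {A B C D : ℤ} (hdet : IsUnit (A * D - B * C))
    (p q : ℤ) : ∃ a b : ℤ, A * a + B * b = p ∧ C * a + D * b = q := by
  have hδ : (A * D - B * C) * (A * D - B * C) = 1 := Int.isUnit_mul_self hdet
  -- the inverse matrix is `(A * D - B * C)` times the adjugate, since the determinant squares to 1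
  exact ⟨(A * D - B * C) * (D * p - B * q), (A * D - B * C) * (A * q - C * p),
    by linear_combination p * hδ, by linear_combination q * hδ⟩

lemma mem_smul_cutProject_inv_smul_iff {ε η s t x : ℝ} {Ω : Set ℝ} (ht : t ≠ 0) :
    x ∈ s • cutProject ε η (t⁻¹ • Ω) ↔
      ∃ a b : ℤ, x = s * (a + b * η) ∧ t * (a + b * ε) ∈ Ω := by
  simp only [Set.mem_smul_set, cutProject, Set.mem_ofPred_eq, Set.mem_inv_smul_set_iff₀ ht,
    smul_eq_mul]
  constructor
  · rintro ⟨_, ⟨a, b, rfl, hΩ⟩, rfl⟩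
    exact ⟨a, b, rfl, hΩ⟩
  · rintro ⟨a, b, rfl, hΩ⟩
    exact ⟨_, ⟨a, b, rfl, hΩ⟩, rfl⟩

theorem cutProject_eq_smul_cutProject_of_isUnit_det {A B C D : ℤ}
    (hdet : IsUnit (A * D - B * C)) {ε η : ℝ} (hε : (A : ℝ) + C * ε ≠ 0)
    (hη : (A : ℝ) + C * η ≠ 0) (Ω : Set ℝ) :
    cutProject ε η Ω =
      ((A : ℝ) + C * η) • cutProject ((B + D * ε) / (A + C * ε)) ((B + D * η) / (A + C * η))
        (((A : ℝ) + C * ε)⁻¹ • Ω) := by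
  ext x
  rw [mem_smul_cutProject_inv_smul_iff hε]
  simp only [mul_add_mul_div_eq _ _ _ _ _ _ _ hε, mul_add_mul_div_eq _ _ _ _ _ _ _ hη]
  constructor
  · rintro ⟨p, q, rfl, hΩ⟩
    obtain ⟨a, b, rfl, rfl⟩ := exists_mul_add_mul_eq_of_isUnit_det hdet p q
    exact ⟨a, b, by push_cast; ring, by push_cast at hΩ; exact hΩ⟩
  · rintro ⟨a, b, rfl, hΩ⟩
    exact ⟨A * a + B * b, C * a + D * b, by push_cast; ring, by push_cast; exact hΩ⟩

theorem cut_and_project_unimodular_general (A B C D : ℤ) (hdet : A * D - B * C = 1 ∨ A * D - B * C = -1)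
    (ε η : ℝ)
    (hAε : (A : ℝ) + (C : ℝ) * ε ≠ 0) (hAη : (A : ℝ) + (C : ℝ) * η ≠ 0)
    (c d : ℝ) :
    cutProject ε η (Set.Ico c d) =
      ((A : ℝ) + (C : ℝ) * η) •
        cutProject (((B : ℝ) + (D : ℝ) * ε) / ((A : ℝ) + (C : ℝ) * ε))
          (((B : ℝ) + (D : ℝ) * η) / ((A : ℝ) + (C : ℝ) * η))
          ((1 / ((A : ℝ) + (C : ℝ) * ε)) • Set.Ico c d) := by
  rw [one_div]
  exact cutProject_eq_smul_cutProject_of_isUnit_det (Int.isUnit_iff.mpr hdet) hAε hAη _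

/-- transformation of a cut-and-project set under a unimodular
integer matrix `[[A,B],[C,D]]`:
`Σ_{ε,η}(Ω) = (A + Cη) · Σ_{(B+Dε)/(A+Cε), (B+Dη)/(A+Cη)}((1/(A+Cε))·Ω)`. -/
theorem cut_and_project_unimodular (A B C D : ℤ) (hdet : A * D - B * C = 1 ∨ A * D - B * C = -1)
    (ε η : ℝ) (hε : Irrational ε) (hη : Irrational η) (hne : ε ≠ η)
    (hAε : (A : ℝ) + (C : ℝ) * ε ≠ 0) (hAη : (A : ℝ) + (C : ℝ) * η ≠ 0)
    (c d : ℝ) :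
    cutProject ε η (Set.Ico c d) =
      ((A : ℝ) + (C : ℝ) * η) •
        cutProject (((B : ℝ) + (D : ℝ) * ε) / ((A : ℝ) + (C : ℝ) * ε))
          (((B : ℝ) + (D : ℝ) * η) / ((A : ℝ) + (C : ℝ) * η))
          ((1 / ((A : ℝ) + (C : ℝ) * ε)) • Set.Ico c d) :=
  cut_and_project_unimodular_general A B C D hdet ε η hAε hAη c d
end
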